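/- Let X_1,…,X_m be drawn independently and uniformly at random from an axis-parallel rectangle [a,b]×[c,d] of positive area, and let M be the number of maximal points among X_1,…,X_m. Then E[M] = Σ_{i=1}^m 1/i, the m-th harmonic number. -/

import Mathlib

open MeasureTheory Real

noncomputable section

/-- `u` dominates `v` if both coordinates of `u` are strictly larger. -/
def Dominates (u v : ℝ × ℝ) : Prop := v.1 < u.1 ∧ v.2 < u.2

/-- The point `X i` is maximal: no point of the sequence dominates it. -/
def IsMaximal {m : ℕ} (X : Fin m → ℝ × ℝ) (i : Fin m) : Prop :=
  ∀ j : Fin m, ¬ Dominates (X j) (X i)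

/-- The point `X i` is minimal: it dominates no point of the sequence. -/
def IsMinimal {m : ℕ} (X : Fin m → ℝ × ℝ) (i : Fin m) : Prop :=
  ∀ j : Fin m, ¬ Dominates (X i) (X j)

/-- The number of maximal points among `X 0, …, X (m-1)`. -/
def numMaximal {m : ℕ} (X : Fin m → ℝ × ℝ) : ℕ :=
  Nat.card {i : Fin m // IsMaximal X i}

/-- The number of minimal points among `X 0, …, X (m-1)`. -/
def numMinimal {m : ℕ} (X : Fin m → ℝ × ℝ) : ℕ :=
  Nat.card {i : Fin m // IsMinimal X i}

/-- The uniform distribution on the axis-parallel rectangle `[a,b] × [c,d]`. -/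
def unifRect (a b c d : ℝ) : Measure (ℝ × ℝ) :=
  (volume (Set.Icc a b ×ˢ Set.Icc c d))⁻¹ • volume.restrict (Set.Icc a b ×ˢ Set.Icc c d)

/-- `m` points drawn independently and uniformly from the rectangle `[a,b] × [c,d]`. -/
def Pm (m : ℕ) (a b c d : ℝ) : Measure (Fin m → ℝ × ℝ) :=
  Measure.pi fun _ => unifRect a b c d

/-!
The point `X i` is maximal iff none of the other `m - 1` independent points lands in the
quadrant strictly above and to the right of it. Given `X i = x`, this happens with probability
`(1 - s t) ^ (m - 1)`, where `s, t ∈ [0, 1]` are the distances from `x` to the upper-right corner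
in units of the side lengths. Hence `P(X i is maximal) = ∫₀¹ ∫₀¹ (1 - s t) ^ (m - 1) dt ds`;
integrating in `t` leaves the geometric sum `(1/m) ∑_{k<m} (1 - s) ^ k`, and integrating in `s`
gives `H_m / m`. Linearity of expectation over the `m` points yields `H_m`.
-/

theorem integral_one_sub_mul_pow (n : ℕ) (s : ℝ) :
    ∫ t in (0 : ℝ)..1, (1 - s * t) ^ n =
      (∑ k ∈ Finset.range (n + 1), (1 - s) ^ k) / (n + 1) := by
  rcases eq_or_ne s 0 with rfl | hs
  · simp
    field_simp
  rw [intervalIntegral.integral_comp_mul_left (fun u => (1 - u) ^ n) hs,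
    intervalIntegral.integral_comp_sub_left (fun u => u ^ n), integral_pow]
  simp only [mul_zero, mul_one, sub_zero, one_pow, smul_eq_mul]
  rw [← neg_sub, ← geom_sum_mul]
  field_simp
  ring

theorem integral_one_sub_pow (k : ℕ) :
    ∫ s in (0 : ℝ)..1, (1 - s) ^ k = 1 / (k + 1) := by
  simp [intervalIntegral.integral_comp_sub_left (fun u => u ^ k), integral_pow]

theorem integral_integral_one_sub_mul_pow (n : ℕ) :
    ∫ s in (0 : ℝ)..1, ∫ t in (0 : ℝ)..1, (1 - s * t) ^ n =
      (∑ k ∈ Finset.range (n + 1), (1 : ℝ) / (k + 1)) / (n + 1) := by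
  simp only [integral_one_sub_mul_pow, intervalIntegral.integral_div]
  rw [intervalIntegral.integral_finsetSum (f := fun k s => (1 - s) ^ k) fun k _ =>
    ((continuous_const.sub continuous_id).pow k).intervalIntegrable 0 1]
  simp only [integral_one_sub_pow]

theorem intervalIntegral_comp_normalize {a b : ℝ} (hab : a ≠ b) (f : ℝ → ℝ) :
    ∫ x in a..b, f ((b - x) / (b - a)) = (b - a) * ∫ s in (0 : ℝ)..1, f s := by
  have hba : b - a ≠ 0 := sub_ne_zero.2 hab.symm
  have := intervalIntegral.integral_comp_sub_div (a := a) (b := b) f hba (b / (b - a))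
  simp_rw [← sub_div] at this
  rw [this, smul_eq_mul, sub_self, zero_div, div_self hba]

theorem setIntegral_Icc_comp_normalize {a b : ℝ} (hab : a < b) (f : ℝ → ℝ) :
    ∫ x in Set.Icc a b, f ((b - x) / (b - a)) = (b - a) * ∫ s in (0 : ℝ)..1, f s := by
  rw [integral_Icc_eq_integral_Ioc, ← intervalIntegral.integral_of_le hab.le,
    intervalIntegral_comp_normalize hab.ne]

theorem setIntegral_Icc_prod_Icc_comp_normalize {a b c d : ℝ} (hab : a < b) (hcd : c < d)
    (g : ℝ → ℝ → ℝ) (hg : Continuous (Function.uncurry g)) :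
    ∫ x in Set.Icc a b ×ˢ Set.Icc c d, g ((b - x.1) / (b - a)) ((d - x.2) / (d - c)) =
      (b - a) * (d - c) * ∫ s in (0 : ℝ)..1, ∫ t in (0 : ℝ)..1, g s t := by
  have hint : IntegrableOn (fun x : ℝ × ℝ => g ((b - x.1) / (b - a)) ((d - x.2) / (d - c)))
      (Set.Icc a b ×ˢ Set.Icc c d) (volume.prod volume) :=
    (by fun_prop : Continuous _).continuousOn.integrableOn_compact
      (isCompact_Icc.prod isCompact_Icc)
  rw [Measure.volume_eq_prod, setIntegral_prod _ hint]
  simp only [setIntegral_Icc_comp_normalize hcd, integral_const_mul,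
    setIntegral_Icc_comp_normalize hab (fun s => ∫ t in (0 : ℝ)..1, g s t)]
  ring

theorem measurableSet_dominates {α : Type*} [MeasurableSpace α] {f g : α → ℝ × ℝ}
    (hf : Measurable f) (hg : Measurable g) : MeasurableSet {x | Dominates (f x) (g x)} :=
  (measurableSet_lt hg.fst hf.fst).inter (measurableSet_lt hg.snd hf.snd)

theorem measurableSet_dominates_left (x : ℝ × ℝ) : MeasurableSet {y | Dominates y x} :=
  measurableSet_dominates measurable_id measurable_const

theorem measurableSet_isMaximal {m : ℕ} (i : Fin m) :
    MeasurableSet {X : Fin m → ℝ × ℝ | IsMaximal X i} := by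
  simp only [IsMaximal, Set.ofPred_forall]
  exact .iInter fun j => (measurableSet_dominates (measurable_pi_apply j)
    (measurable_pi_apply i)).compl

theorem numMaximal_eq_sum_indicator {m : ℕ} (X : Fin m → ℝ × ℝ) :
    (numMaximal X : ℝ) = ∑ i, {Y | IsMaximal Y i}.indicator 1 X := by
  classical
  simp only [Set.indicator_apply, Set.mem_ofPred_eq, Pi.one_apply, Finset.sum_boole]
  rw [numMaximal, Nat.card_eq_fintype_card, Fintype.card_subtype]

theorem integral_numMaximal {m : ℕ} (P : Measure (Fin m → ℝ × ℝ)) [IsFiniteMeasure P] :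
    ∫ X, (numMaximal X : ℝ) ∂P = ∑ i, P.real {X | IsMaximal X i} := by
  simp_rw [numMaximal_eq_sum_indicator]
  rw [integral_finsetSum _ fun i _ => (integrable_const 1).indicator (measurableSet_isMaximal i)]
  simp only [integral_indicator_one (measurableSet_isMaximal _)]

theorem pi_isMaximal {n : ℕ} (μ : Measure (ℝ × ℝ)) [SigmaFinite μ] (i : Fin (n + 1)) :
    Measure.pi (fun _ => μ) {X : Fin (n + 1) → ℝ × ℝ | IsMaximal X i} =
      ∫⁻ x, μ {y | ¬ Dominates y x} ^ n ∂μ := by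
  have hT : MeasurableSet {p : (ℝ × ℝ) × (Fin n → ℝ × ℝ) | ∀ j, ¬ Dominates (p.2 j) p.1} := by
    simp only [Set.ofPred_forall]
    exact .iInter fun j => (measurableSet_dominates
      ((measurable_pi_apply j).comp measurable_snd) measurable_fst).compl
  have hpre : {X : Fin (n + 1) → ℝ × ℝ | IsMaximal X i} =
      MeasurableEquiv.piFinSuccAbove (fun _ => ℝ × ℝ) i ⁻¹'
        {p | ∀ j, ¬ Dominates (p.2 j) p.1} := by
    ext X
    simp [IsMaximal, Fin.forall_iff_succAbove i, Dominates, Fin.removeNth]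
  rw [hpre, (measurePreserving_piFinSuccAbove (fun _ => μ) i).measure_preimage
    hT.nullMeasurableSet, Measure.prod_apply hT]
  refine lintegral_congr fun x => ?_
  have hslice : Prod.mk x ⁻¹' {p : (ℝ × ℝ) × (Fin n → ℝ × ℝ) | ∀ j, ¬ Dominates (p.2 j) p.1} =
      Set.univ.pi fun _ => {y | ¬ Dominates y x} := by
    ext
    simp
  simp [hslice, Measure.pi_pi]

theorem pi_real_isMaximal {n : ℕ} (μ : Measure (ℝ × ℝ)) [IsFiniteMeasure μ] (i : Fin (n + 1)) :
    (Measure.pi fun _ => μ).real {X : Fin (n + 1) → ℝ × ℝ | IsMaximal X i} =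
      ∫ x, μ.real {y | ¬ Dominates y x} ^ n ∂μ := by
  have hmeas : Measurable fun x => μ {y | ¬ Dominates y x} :=
    measurable_measure_prodMk_left (measurableSet_dominates measurable_snd measurable_fst).compl
  rw [measureReal_def, pi_isMaximal, ← integral_toReal (hmeas.pow_const n).aemeasurable
    (.of_forall fun x => ENNReal.pow_lt_top (measure_lt_top μ _))]
  simp only [ENNReal.toReal_pow, measureReal_def]

theorem volume_Icc_prod_Icc (a b c d : ℝ) :
    volume (Set.Icc a b ×ˢ Set.Icc c d) = ENNReal.ofReal (b - a) * ENNReal.ofReal (d - c) := by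
  rw [Measure.volume_eq_prod, Measure.prod_prod, Real.volume_Icc, Real.volume_Icc]

theorem isProbabilityMeasure_unifRect {a b c d : ℝ} (hab : a < b) (hcd : c < d) :
    IsProbabilityMeasure (unifRect a b c d) := by
  have h0 : volume (Set.Icc a b ×ˢ Set.Icc c d) ≠ 0 := by
    rw [volume_Icc_prod_Icc]
    simp [hab, hcd]
  have htop : volume (Set.Icc a b ×ˢ Set.Icc c d) ≠ ⊤ := by
    rw [volume_Icc_prod_Icc]
    finiteness
  constructor
  rw [unifRect, Measure.smul_apply, Measure.restrict_apply_univ, smul_eq_mul,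
    ENNReal.inv_mul_cancel h0 htop]

theorem isProbabilityMeasure_Pm {a b c d : ℝ} (hab : a < b) (hcd : c < d) (m : ℕ) :
    IsProbabilityMeasure (Pm m a b c d) := by
  have := isProbabilityMeasure_unifRect hab hcd
  unfold Pm
  infer_instance

theorem integral_unifRect {a b c d : ℝ} (hab : a ≤ b) (hcd : c ≤ d) (f : ℝ × ℝ → ℝ) :
    ∫ x, f x ∂unifRect a b c d =
      ((b - a) * (d - c))⁻¹ * ∫ x in Set.Icc a b ×ˢ Set.Icc c d, f x := by
  rw [unifRect, integral_smul_measure, volume_Icc_prod_Icc, smul_eq_mul, ENNReal.toReal_inv,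
    ENNReal.toReal_mul, ENNReal.toReal_ofReal (sub_nonneg.2 hab),
    ENNReal.toReal_ofReal (sub_nonneg.2 hcd)]

theorem unifRect_real_dominates {a b c d : ℝ} (hab : a < b) (hcd : c < d) {x : ℝ × ℝ}
    (hx : x ∈ Set.Icc a b ×ˢ Set.Icc c d) :
    (unifRect a b c d).real {y | Dominates y x} = (b - x.1) / (b - a) * ((d - x.2) / (d - c)) := by
  obtain ⟨⟨hax, hxb⟩, hcx, hxd⟩ := hx
  have hinter : {y | Dominates y x} ∩ Set.Icc a b ×ˢ Set.Icc c d =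
      Set.Ioc x.1 b ×ˢ Set.Ioc x.2 d := by
    ext y
    simp only [Dominates, Set.mem_inter_iff, Set.mem_prod, Set.mem_Icc, Set.mem_Ioc]
    constructor <;> intro h <;> refine ⟨⟨?_, ?_⟩, ?_, ?_⟩ <;> grind
  rw [measureReal_def, unifRect, Measure.smul_apply,
    Measure.restrict_apply (measurableSet_dominates_left x), hinter,
    smul_eq_mul, ENNReal.toReal_mul, ENNReal.toReal_inv]
  simp only [Measure.volume_eq_prod, Measure.prod_prod, Real.volume_Ioc, Real.volume_Icc,
    ENNReal.toReal_mul, ENNReal.toReal_ofReal, sub_nonneg, hxb, hxd, hab.le, hcd.le]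
  field_simp

theorem unifRect_real_not_dominates {a b c d : ℝ} (hab : a < b) (hcd : c < d) {x : ℝ × ℝ}
    (hx : x ∈ Set.Icc a b ×ˢ Set.Icc c d) :
    (unifRect a b c d).real {y | ¬ Dominates y x} =
      1 - (b - x.1) / (b - a) * ((d - x.2) / (d - c)) := by
  have := isProbabilityMeasure_unifRect hab hcd
  rw [← unifRect_real_dominates hab hcd hx, ← probReal_compl_eq_one_sub
    (measurableSet_dominates_left x)]
  rfl

theorem Pm_real_isMaximal {a b c d : ℝ} (hab : a < b) (hcd : c < d) {m : ℕ} (i : Fin m) :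
    (Pm m a b c d).real {X | IsMaximal X i} = (∑ k ∈ Finset.range m, (1 : ℝ) / (k + 1)) / m := by
  obtain ⟨n, rfl⟩ := Nat.exists_eq_add_one.2 i.pos
  have := isProbabilityMeasure_unifRect hab hcd
  have hba : b - a ≠ 0 := sub_ne_zero.2 hab.ne'
  have hdc : d - c ≠ 0 := sub_ne_zero.2 hcd.ne'
  rw [Pm, pi_real_isMaximal, integral_unifRect hab.le hcd.le,
    setIntegral_congr_fun (measurableSet_Icc.prod measurableSet_Icc)
      fun x hx => by rw [unifRect_real_not_dominates hab hcd hx],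
    setIntegral_Icc_prod_Icc_comp_normalize hab hcd (fun s t => (1 - s * t) ^ n) (by fun_prop),
    integral_integral_one_sub_mul_pow]
  push_cast
  field_simp

theorem expected_maxima_harmonic_general (a b c d : ℝ) (hab : a < b) (hcd : c < d)
    (m : ℕ) :
    ∫ X, (numMaximal X : ℝ) ∂(Pm m a b c d) =
      ∑ i ∈ Finset.range m, (1 : ℝ) / (i + 1) := by
  have := isProbabilityMeasure_Pm hab hcd m
  rw [integral_numMaximal, Finset.sum_congr rfl fun i _ => Pm_real_isMaximal hab hcd i,
    Finset.sum_const, Finset.card_univ, Fintype.card_fin, nsmul_eq_mul]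
  rcases m.eq_zero_or_pos with rfl | hm
  · simp
  · field_simp

/-- For `m` points drawn independently and uniformly from a rectangle
of positive area, the expected number of maximal points equals the `m`-th harmonic
number `Σ_{i=1}^m 1/i`. -/
theorem expected_maxima_harmonic (a b c d : ℝ) (hab : a < b) (hcd : c < d)
    (m : ℕ) (hm : 1 ≤ m) :
    ∫ X, (numMaximal X : ℝ) ∂(Pm m a b c d) =
      ∑ i ∈ Finset.range m, (1 : ℝ) / (i + 1) :=
  expected_maxima_harmonic_general a b c d hab hcd m
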